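/- arXiv:2510.05523 — 9 statements merged into one kernel-verified Lean document; each statement's English description precedes it below -/
import Mathlib

section
/- A differentiable function f : X → ℝ on a nonempty open set X ⊆ ℝⁿ is invex if and only if every stationary point of f (a point x* with ∇f(x*) = 0) is a global minimizer of f. -/
/-!
If `∇f x ≠ 0`, any value `f y - f x` is attained as `⟪∇f x, η⟫` by a multiple `η` of `∇f x`, so
invexity only constrains stationary points, where it says exactly that `f x ≤ f y`.
-/

open RealInnerProductSpace

section Invex

variable {E : Type*} [NormedAddCommGroup E] [InnerProductSpace ℝ E]

theorem inner_smul_div_norm_sq_self {v : E} (hv : v ≠ 0) (c : ℝ) :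
    ⟪v, (c / ‖v‖ ^ 2) • v⟫ = c := by
  rw [inner_smul_right, real_inner_self_eq_norm_sq]
  exact div_mul_cancel₀ c (pow_ne_zero 2 (norm_ne_zero_iff.mpr hv))

variable [CompleteSpace E]

def InvexOn (f : E → ℝ) (X : Set E) : Prop :=
  ∃ η : E → E → E, ∀ x ∈ X, ∀ y ∈ X, f y - f x ≥ ⟪gradient f x, η x y⟫

theorem InvexOn.isMinOn_of_gradient_eq_zero {f : E → ℝ} {X : Set E} (hf : InvexOn f X)
    {x : E} (hx : x ∈ X) (hg : gradient f x = 0) : IsMinOn f X x := by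
  obtain ⟨η, hη⟩ := hf
  refine isMinOn_iff.mpr fun y hy => ?_
  have := hη x hx y hy
  rw [hg, inner_zero_left] at this
  linarith

theorem invexOn_of_forall_isMinOn {f : E → ℝ} {X : Set E}
    (h : ∀ x ∈ X, gradient f x = 0 → IsMinOn f X x) : InvexOn f X := by
  refine ⟨fun x y => ((f y - f x) / ‖gradient f x‖ ^ 2) • gradient f x, fun x hx y hy => ?_⟩
  by_cases hg : gradient f x = 0
  · simpa [hg] using isMinOn_iff.mp (h x hx hg) y hy
  · exact (inner_smul_div_norm_sq_self hg _).le

theorem invexOn_iff_forall_isMinOn {f : E → ℝ} {X : Set E} :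
    InvexOn f X ↔ ∀ x ∈ X, gradient f x = 0 → IsMinOn f X x :=
  ⟨fun hf _ hx hg => hf.isMinOn_of_gradient_eq_zero hx hg, invexOn_of_forall_isMinOn⟩

end Invex

theorem invex_iff_stationary_global_min_general {n : ℕ}
    (X : Set (EuclideanSpace ℝ (Fin n)))
    (f : EuclideanSpace ℝ (Fin n) → ℝ) :
    (∃ η : EuclideanSpace ℝ (Fin n) → EuclideanSpace ℝ (Fin n) → EuclideanSpace ℝ (Fin n),
      ∀ x ∈ X, ∀ y ∈ X, f y - f x ≥ ⟪gradient f x, η x y⟫) ↔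
    (∀ x ∈ X, gradient f x = 0 → ∀ y ∈ X, f x ≤ f y) := by
  simpa only [InvexOn, isMinOn_iff] using invexOn_iff_forall_isMinOn (f := f) (X := X)

/-- A differentiable function on a nonempty open set `X ⊆ ℝⁿ` is invex iff every
stationary point is a global minimizer. -/
theorem invex_iff_stationary_global_min {n : ℕ}
    (X : Set (EuclideanSpace ℝ (Fin n))) (hX : IsOpen X) (hXne : X.Nonempty)
    (f : EuclideanSpace ℝ (Fin n) → ℝ)
    (hf : ∀ x ∈ X, DifferentiableAt ℝ f x) :
    (∃ η : EuclideanSpace ℝ (Fin n) → EuclideanSpace ℝ (Fin n) → EuclideanSpace ℝ (Fin n),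
      ∀ x ∈ X, ∀ y ∈ X, f y - f x ≥ ⟪gradient f x, η x y⟫) ↔
    (∀ x ∈ X, gradient f x = 0 → ∀ y ∈ X, f x ≤ f y) :=
  invex_iff_stationary_global_min_general X f
end

section
/- If f is a differentiable function on an open set X ⊆ ℝⁿ such that every stationary point is a global minimizer, then f is invex with the explicit kernel η(x,y) = 0 if ∇f(x) = 0, and η(x,y) = (f(y) - f(x)) ∇f(x) / ‖∇f(x)‖² otherwise; that is, this η satisfies f(y) - f(x) ≥ ⟨∇f(x), η(x,y)⟩ for all x, y ∈ X. -/
open RealInnerProductSpace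
open scoped Classical

theorem real_inner_div_norm_sq_smul_self {E : Type*} [NormedAddCommGroup E]
    [InnerProductSpace ℝ E] {g : E} (hg : g ≠ 0) (a : ℝ) :
    ⟪g, (a / ‖g‖ ^ 2) • g⟫ = a := by
  have hnorm : ‖g‖ ^ 2 ≠ 0 := pow_ne_zero _ (norm_ne_zero_iff.mpr hg)
  rw [real_inner_smul_right, real_inner_self_eq_norm_sq, div_mul_cancel₀ a hnorm]

theorem invex_explicit_kernel_general {n : ℕ}
    (X : Set (EuclideanSpace ℝ (Fin n)))
    (f : EuclideanSpace ℝ (Fin n) → ℝ)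
    (hmin : ∀ x ∈ X, gradient f x = 0 → ∀ y ∈ X, f x ≤ f y) :
    ∀ x ∈ X, ∀ y ∈ X, f y - f x ≥
      ⟪gradient f x,
        if gradient f x = 0 then (0 : EuclideanSpace ℝ (Fin n))
        else ((f y - f x) / ‖gradient f x‖ ^ 2) • gradient f x⟫ := by
  intro x hx y hy
  split_ifs with hstat
  · rw [inner_zero_right]
    exact sub_nonneg.mpr (hmin x hx hstat y hy)
  · rw [real_inner_div_norm_sq_smul_self hstat]

/-- Explicit kernel construction: if every stationary point is a global minimizer,
then `η(x,y) = 0` if `∇f(x) = 0` and `η(x,y) = ((f y - f x)/‖∇f x‖²) • ∇f x` otherwise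
is a kernel witnessing invexity. -/
theorem invex_explicit_kernel {n : ℕ}
    (X : Set (EuclideanSpace ℝ (Fin n))) (hX : IsOpen X) (hXne : X.Nonempty)
    (f : EuclideanSpace ℝ (Fin n) → ℝ)
    (hf : ∀ x ∈ X, DifferentiableAt ℝ f x)
    (hmin : ∀ x ∈ X, gradient f x = 0 → ∀ y ∈ X, f x ≤ f y) :
    ∀ x ∈ X, ∀ y ∈ X, f y - f x ≥
      ⟪gradient f x,
        if gradient f x = 0 then (0 : EuclideanSpace ℝ (Fin n))
        else ((f y - f x) / ‖gradient f x‖ ^ 2) • gradient f x⟫ :=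
  invex_explicit_kernel_general X f hmin
end

section
/- Consider minimizing f(x) subject to gᵢ(x) ≤ 0 for i = 1,…,m, where f and each gᵢ are differentiable and invex with the same kernel function η. Then every KKT point (a point x* with ∇f(x*) + Σᵢ λᵢ ∇gᵢ(x*) = 0, gᵢ(x*) ≤ 0, λᵢ ≥ 0, λᵢ gᵢ(x*) = 0) is a global minimizer of f over the feasible set {x : gᵢ(x) ≤ 0 for all i}. -/
open RealInnerProductSpace

/-- If the objective and the constraint functions are invex with a common kernel,
then every KKT point is a global minimizer over the feasible set. -/
theorem kkt_point_global_min {n m : ℕ}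
    (X : Set (EuclideanSpace ℝ (Fin n))) (hX : IsOpen X)
    (f : EuclideanSpace ℝ (Fin n) → ℝ)
    (g : Fin m → EuclideanSpace ℝ (Fin n) → ℝ)
    (hf : ∀ x ∈ X, DifferentiableAt ℝ f x)
    (hg : ∀ i, ∀ x ∈ X, DifferentiableAt ℝ (g i) x)
    (η : EuclideanSpace ℝ (Fin n) → EuclideanSpace ℝ (Fin n) → EuclideanSpace ℝ (Fin n))
    (hfi : ∀ x ∈ X, ∀ y ∈ X, f y - f x ≥ ⟪gradient f x, η x y⟫)
    (hgi : ∀ i, ∀ x ∈ X, ∀ y ∈ X, g i y - g i x ≥ ⟪gradient (g i) x, η x y⟫)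
    (xs : EuclideanSpace ℝ (Fin n)) (hxs : xs ∈ X)
    (lam : Fin m → ℝ)
    (hstat : gradient f xs + ∑ i, lam i • gradient (g i) xs = 0)
    (hfeas : ∀ i, g i xs ≤ 0)
    (hlam : ∀ i, 0 ≤ lam i)
    (hcomp : ∀ i, lam i * g i xs = 0) :
    ∀ x ∈ X, (∀ i, g i x ≤ 0) → f xs ≤ f x := by
  intro x hx hgx
  have hgrad : gradient f xs = -∑ i, lam i • gradient (g i) xs := by
    linear_combination (norm := module) hstat
  have key : ⟪gradient f xs, η xs x⟫ = -∑ i, lam i * ⟪gradient (g i) xs, η xs x⟫ := by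
    rw [hgrad, inner_neg_left, sum_inner]
    simp [real_inner_smul_left, Finset.mul_sum, mul_assoc]
  have h1 := hfi xs hxs x hx
  have h2 : ∀ i, lam i * ⟪gradient (g i) xs, η xs x⟫ ≤ lam i * (g i x - g i xs) := fun i =>
    mul_le_mul_of_nonneg_left (hgi i xs hxs x hx) (hlam i)
  have h3 : ∑ i, lam i * ⟪gradient (g i) xs, η xs x⟫ ≤ ∑ i, lam i * g i x := by
    refine (Finset.sum_le_sum fun i _ => h2 i).trans (le_of_eq ?_)
    refine Finset.sum_congr rfl fun i _ => ?_
    have := hcomp i; ring_nf; linarith [hcomp i]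
  have h4 : ∑ i, lam i * g i x ≤ 0 :=
    Finset.sum_nonpos fun i _ => mul_nonpos_of_nonneg_of_nonpos (hlam i) (hgx i)
  rw [key] at h1
  linarith
end

section
/- Let g : X → ℝ be convex, differentiable, and nonnegative, and let h : X → ℝ be concave, differentiable, and strictly positive on an open convex set X ⊆ ℝⁿ. Then f = g/h is invex with kernel η(x,y) = (h(x)/h(y))·(y - x); that is, f(y) - f(x) ≥ ⟨∇f(x), η(x,y)⟩ for all x, y ∈ X. -/
/-!
A differentiable convex function lies above its tangent planes and a concave one below them:
`g y ≥ g x + g'(x)(y - x)` and `h y ≤ h x + h'(x)(y - x)`. Multiplying the second bound by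
`g x / h x ≥ 0` and subtracting it from the first gives, after the quotient rule, the invexity
inequality; the factor `h x / h y` in the kernel is exactly what clears the denominators.
-/

open RealInnerProductSpace

section FirstOrder

variable {E : Type*} [NormedAddCommGroup E] [NormedSpace ℝ E] {s : Set E} {f : E → ℝ} {x y : E}

lemma hasDerivAt_comp_lineMap (hf : DifferentiableAt ℝ f x) :
    HasDerivAt (f ∘ (AffineMap.lineMap x y : ℝ →ᵃ[ℝ] E)) (fderiv ℝ f x (y - x)) 0 := by
  have hf' : HasFDerivAt f (fderiv ℝ f x) (AffineMap.lineMap x y (0 : ℝ)) := by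
    simpa using hf.hasFDerivAt
  exact hf'.comp_hasDerivAt 0 AffineMap.hasDerivAt_lineMap

lemma ConvexOn.add_fderiv_le (hf : ConvexOn ℝ s f) (hx : x ∈ s) (hy : y ∈ s)
    (hfx : DifferentiableAt ℝ f x) : f x + fderiv ℝ f x (y - x) ≤ f y := by
  have := (hf.comp_affineMap (AffineMap.lineMap x y)).le_slope_of_hasDerivAt
    (by simpa using hx) (by simpa using hy) one_pos (hasDerivAt_comp_lineMap hfx)
  simp only [slope_def_field, Function.comp_apply, AffineMap.lineMap_apply_zero,
    AffineMap.lineMap_apply_one, sub_zero, div_one] at this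
  linarith

lemma ConcaveOn.le_add_fderiv (hf : ConcaveOn ℝ s f) (hx : x ∈ s) (hy : y ∈ s)
    (hfx : DifferentiableAt ℝ f x) : f y ≤ f x + fderiv ℝ f x (y - x) := by
  have := (hf.comp_affineMap (AffineMap.lineMap x y)).slope_le_of_hasDerivAt
    (by simpa using hx) (by simpa using hy) one_pos (hasDerivAt_comp_lineMap hfx)
  simp only [slope_def_field, Function.comp_apply, AffineMap.lineMap_apply_zero,
    AffineMap.lineMap_apply_one, sub_zero, div_one] at this
  linarith

end FirstOrder

theorem HasFDerivAt.fun_div {𝕜 E : Type*} [NontriviallyNormedField 𝕜] [NormedAddCommGroup E]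
    [NormedSpace 𝕜 E] {c d : E → 𝕜} {c' d' : E →L[𝕜] 𝕜} {x : E}
    (hc : HasFDerivAt c c' x) (hd : HasFDerivAt d d' x) (hx : d x ≠ 0) :
    HasFDerivAt (fun y => c y / d y) ((d x ^ 2)⁻¹ • (d x • c' - c x • d')) x := by
  have hinv : HasFDerivAt (fun y => (d y)⁻¹) _ x := (hasFDerivAt_inv hx).comp x hd
  simp only [div_eq_mul_inv]
  refine (hc.fun_mul hinv).congr_fderiv ?_
  ext v
  simp only [add_apply, smul_apply, ContinuousLinearMap.comp_apply,
    ContinuousLinearMap.toSpanSingleton_apply, smul_eq_mul, sub_apply]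
  field_simp
  ring

/-- Here `a, b, p, q` stand for `g x, g y, h x, h y` and `a', p'` for the derivatives of `g, h`
at `x` in the direction `y - x`. -/
lemma le_div_sub_div_of_tangent_bounds {a b p q a' p' : ℝ} (hb : a + a' ≤ b) (hq : q ≤ p + p')
    (ha : 0 ≤ a) (hp : 0 < p) (hq₀ : 0 < q) :
    p / q * ((p ^ 2)⁻¹ * (p * a' - a * p')) ≤ b / q - a / p := by
  have key : p * a' - a * p' ≤ p * b - a * q := by
    nlinarith [mul_le_mul_of_nonneg_left hq ha]
  calc p / q * ((p ^ 2)⁻¹ * (p * a' - a * p')) = (p * a' - a * p') / (p * q) := by field_simp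
    _ ≤ (p * b - a * q) / (p * q) := by gcongr
    _ = b / q - a / p := by field_simp

theorem ConvexOn.inner_gradient_div_le {F : Type*} [NormedAddCommGroup F] [InnerProductSpace ℝ F]
    [CompleteSpace F] {s : Set F} {g h : F → ℝ} {x y : F}
    (hg : ConvexOn ℝ s g) (hh : ConcaveOn ℝ s h) (hx : x ∈ s) (hy : y ∈ s)
    (hgx : DifferentiableAt ℝ g x) (hhx : DifferentiableAt ℝ h x)
    (hg₀ : 0 ≤ g x) (hhx₀ : 0 < h x) (hhy₀ : 0 < h y) :
    ⟪gradient (fun z => g z / h z) x, (h x / h y) • (y - x)⟫ ≤ g y / h y - g x / h x := by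
  rw [real_inner_smul_right, inner_gradient_left,
    (hgx.hasFDerivAt.fun_div hhx.hasFDerivAt hhx₀.ne').fderiv]
  simp only [smul_apply, sub_apply, smul_eq_mul]
  exact le_div_sub_div_of_tangent_bounds (hg.add_fderiv_le hx hy hgx)
    (hh.le_add_fderiv hx hy hhx) hg₀ hhx₀ hhy₀

theorem invex_fractional_general {n : ℕ}
    (X : Set (EuclideanSpace ℝ (Fin n)))
    (g h : EuclideanSpace ℝ (Fin n) → ℝ)
    (hgconv : ConvexOn ℝ X g) (hgdiff : ∀ x ∈ X, DifferentiableAt ℝ g x)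
    (hgnonneg : ∀ x ∈ X, 0 ≤ g x)
    (hhconc : ConcaveOn ℝ X h) (hhdiff : ∀ x ∈ X, DifferentiableAt ℝ h x)
    (hhpos : ∀ x ∈ X, 0 < h x) :
    ∀ x ∈ X, ∀ y ∈ X,
      g y / h y - g x / h x ≥
        ⟪gradient (fun z => g z / h z) x, (h x / h y) • (y - x)⟫ :=
  fun x hx y hy => hgconv.inner_gradient_div_le hhconc hx hy (hgdiff x hx) (hhdiff x hx)
    (hgnonneg x hx) (hhpos x hx) (hhpos y hy)

/-- Fractional programming: `f = g/h` with `g` convex nonnegative and `h` concave positive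
is invex with kernel `η(x,y) = (h(x)/h(y))·(y-x)`. -/
theorem invex_fractional {n : ℕ}
    (X : Set (EuclideanSpace ℝ (Fin n))) (hX : IsOpen X) (hXc : Convex ℝ X) (hXne : X.Nonempty)
    (g h : EuclideanSpace ℝ (Fin n) → ℝ)
    (hgconv : ConvexOn ℝ X g) (hgdiff : ∀ x ∈ X, DifferentiableAt ℝ g x)
    (hgnonneg : ∀ x ∈ X, 0 ≤ g x)
    (hhconc : ConcaveOn ℝ X h) (hhdiff : ∀ x ∈ X, DifferentiableAt ℝ h x)
    (hhpos : ∀ x ∈ X, 0 < h x) :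
    ∀ x ∈ X, ∀ y ∈ X,
      g y / h y - g x / h x ≥
        ⟪gradient (fun z => g z / h z) x, (h x / h y) • (y - x)⟫ :=
  invex_fractional_general X g h hgconv hgdiff hgnonneg hhconc hhdiff hhpos
end

section
/- Let φ : I → ℝ be concave, continuously differentiable with φ'(t) > 0 for all t in an open interval I ⊆ ℝ, and let g : X → ℝ be convex and differentiable with g(X) ⊆ I on an open convex set X ⊆ ℝⁿ. Then f(x) = φ(g(x)) is invex with kernel η(x,y) = (φ'(g(y))/φ'(g(x)))·(y - x); that is, f(y) - f(x) ≥ ⟨∇f(x), η(x,y)⟩ for all x, y ∈ X. -/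
open RealInnerProductSpace

/-!
Concavity of `φ`, through its tangent at `g y`, gives `φ (g y) - φ (g x) ≥ φ' (g y) (g y - g x)`;
convexity of `g` gives `g y - g x ≥ Dg(x) (y - x)`, and `φ' (g y) ≥ 0` chains the two. The factor
`1 / φ' (g x)` of the kernel cancels the chain-rule factor in `∇f(x) = φ' (g x) ∇g(x)`.
-/

lemma ConvexOn.mul_sub_le_of_hasDerivAt {S : Set ℝ} {f : ℝ → ℝ} {x y f' : ℝ}
    (hf : ConvexOn ℝ S f) (hx : x ∈ S) (hy : y ∈ S) (hf' : HasDerivAt f f' x) :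
    f' * (y - x) ≤ f y - f x := by
  rcases lt_trichotomy x y with hxy | rfl | hyx
  · have hslope := hf.le_slope_of_hasDerivAt hx hy hxy hf'
    rw [slope_def_field, le_div_iff₀ (sub_pos.2 hxy)] at hslope
    exact hslope
  · simp
  · have hslope := hf.slope_le_of_hasDerivAt hy hx hyx hf'
    rw [slope_def_field, div_le_iff₀ (sub_pos.2 hyx)] at hslope
    linarith

lemma ConcaveOn.sub_le_mul_sub_of_hasDerivAt {S : Set ℝ} {f : ℝ → ℝ} {x y f' : ℝ}
    (hf : ConcaveOn ℝ S f) (hx : x ∈ S) (hy : y ∈ S) (hf' : HasDerivAt f f' x) :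
    f y - f x ≤ f' * (y - x) := by
  have h := hf.neg.mul_sub_le_of_hasDerivAt hx hy hf'.neg
  simp only [Pi.neg_apply] at h
  linarith

lemma ConvexOn.fderiv_sub_le {E : Type*} [NormedAddCommGroup E] [NormedSpace ℝ E]
    {s : Set E} {g : E → ℝ} {g' : E →L[ℝ] ℝ} {x y : E}
    (hg : ConvexOn ℝ s g) (hs : Convex ℝ s) (hx : x ∈ s) (hy : y ∈ s)
    (hg' : HasFDerivAt g g' x) :
    g' (y - x) ≤ g y - g x := by
  have hline : ConvexOn ℝ (Set.Icc 0 1) (g ∘ AffineMap.lineMap (k := ℝ) x y) :=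
    (hg.comp_affineMap _).subset (fun _ ht => hs.lineMap_mem hx hy ht) (convex_Icc 0 1)
  have hderiv : HasDerivAt (g ∘ AffineMap.lineMap (k := ℝ) x y) (g' (y - x)) 0 := by
    refine HasFDerivAt.comp_hasDerivAt (0 : ℝ) ?_ AffineMap.hasDerivAt_lineMap
    simpa using hg'
  simpa using hline.mul_sub_le_of_hasDerivAt (y := 1) (by simp) (by simp) hderiv

lemma ConcaveOn.mul_fderiv_sub_le_comp_sub {E : Type*} [NormedAddCommGroup E] [NormedSpace ℝ E]
    {s : Set E} {I : Set ℝ} {φ : ℝ → ℝ} {g : E → ℝ} {φ' : ℝ} {g' : E →L[ℝ] ℝ} {x y : E}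
    (hφ : ConcaveOn ℝ I φ) (hg : ConvexOn ℝ s g) (hs : Convex ℝ s) (hgI : Set.MapsTo g s I)
    (hx : x ∈ s) (hy : y ∈ s) (hφ' : HasDerivAt φ φ' (g y)) (hφ'_nonneg : 0 ≤ φ')
    (hg' : HasFDerivAt g g' x) :
    φ' * g' (y - x) ≤ φ (g y) - φ (g x) := by
  have hconc := hφ.sub_le_mul_sub_of_hasDerivAt (hgI hy) (hgI hx) hφ'
  calc φ' * g' (y - x) ≤ φ' * (g y - g x) :=
        mul_le_mul_of_nonneg_left (hg.fderiv_sub_le hs hx hy hg') hφ'_nonneg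
    _ ≤ φ (g y) - φ (g x) := by linarith

theorem invex_concave_convex_composite_general {n : ℕ} (a b : ℝ)
    (X : Set (EuclideanSpace ℝ (Fin n))) (hXc : Convex ℝ X)
    (φ : ℝ → ℝ)
    (hφconc : ConcaveOn ℝ (Set.Ioo a b) φ)
    (hφdiff : ∀ t ∈ Set.Ioo a b, DifferentiableAt ℝ φ t)
    (hφpos : ∀ t ∈ Set.Ioo a b, 0 < deriv φ t)
    (g : EuclideanSpace ℝ (Fin n) → ℝ)
    (hgconv : ConvexOn ℝ X g) (hgdiff : ∀ x ∈ X, DifferentiableAt ℝ g x)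
    (hrange : ∀ x ∈ X, g x ∈ Set.Ioo a b) :
    ∀ x ∈ X, ∀ y ∈ X,
      φ (g y) - φ (g x) ≥
        ⟪gradient (fun z => φ (g z)) x, (deriv φ (g y) / deriv φ (g x)) • (y - x)⟫ := by
  intro x hx y hy
  have hcomp : HasFDerivAt (fun z => φ (g z)) (deriv φ (g x) • fderiv ℝ g x) x :=
    (hφdiff _ (hrange x hx)).hasDerivAt.comp_hasFDerivAt x (hgdiff x hx).hasFDerivAt
  have hkernel : ⟪gradient (fun z => φ (g z)) x, (deriv φ (g y) / deriv φ (g x)) • (y - x)⟫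
      = deriv φ (g y) * fderiv ℝ g x (y - x) := by
    rw [inner_gradient_left, hcomp.fderiv]
    simp only [FunLike.coe_smul, Pi.smul_apply, map_smul, smul_eq_mul]
    field_simp [(hφpos _ (hrange x hx)).ne']
  rw [hkernel]
  exact hφconc.mul_fderiv_sub_le_comp_sub hgconv hXc hrange hx hy
    (hφdiff _ (hrange y hy)).hasDerivAt (hφpos _ (hrange y hy)).le (hgdiff x hx).hasFDerivAt

/-- Concave increasing transformation of a convex function is invex with kernel
`η(x,y) = (φ'(g(y))/φ'(g(x)))·(y-x)`. -/
theorem invex_concave_convex_composite {n : ℕ} (a b : ℝ)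
    (X : Set (EuclideanSpace ℝ (Fin n))) (hX : IsOpen X) (hXc : Convex ℝ X) (hXne : X.Nonempty)
    (φ : ℝ → ℝ)
    (hφconc : ConcaveOn ℝ (Set.Ioo a b) φ)
    (hφdiff : ∀ t ∈ Set.Ioo a b, DifferentiableAt ℝ φ t)
    (hφcont : ContinuousOn (deriv φ) (Set.Ioo a b))
    (hφpos : ∀ t ∈ Set.Ioo a b, 0 < deriv φ t)
    (g : EuclideanSpace ℝ (Fin n) → ℝ)
    (hgconv : ConvexOn ℝ X g) (hgdiff : ∀ x ∈ X, DifferentiableAt ℝ g x)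
    (hrange : ∀ x ∈ X, g x ∈ Set.Ioo a b) :
    ∀ x ∈ X, ∀ y ∈ X,
      φ (g y) - φ (g x) ≥
        ⟪gradient (fun z => φ (g z)) x, (deriv φ (g y) / deriv φ (g x)) • (y - x)⟫ :=
  invex_concave_convex_composite_general a b X hXc φ hφconc hφdiff hφpos g hgconv hgdiff hrange
end

section
/- Let 0 < p < 1 and let g : X → ℝ be convex, differentiable, and strictly positive on an open convex set X ⊆ ℝⁿ. Then f(x) = g(x)^p is invex with kernel η(x,y) = (g(y)/g(x))^(p-1)·(y - x); that is, f(y) - f(x) ≥ ⟨∇f(x), η(x,y)⟩ for all x, y ∈ X. -/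
/-!
Write `a = g x`, `b = g y` and `c = p b^(p-1) > 0`. The kernel is chosen so that the gradient term
collapses: `∇f(x) = p a^(p-1) ∇g(x)`, hence `⟪∇f(x), η(x,y)⟫ = c ⟪∇g(x), y - x⟫`. The gradient
inequality of the convex `g` bounds this by `c (b - a)`, and the tangent inequality of the concave
`t ↦ t^p` at `b` bounds that by `b^p - a^p`.
-/

open RealInnerProductSpace

section

variable {E : Type*} [NormedAddCommGroup E] [InnerProductSpace ℝ E] [CompleteSpace E]

theorem ConvexOn.inner_le_sub_of_hasGradientAt {s : Set E} {f : E → ℝ} {f' x y : E}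
    (hf : ConvexOn ℝ s f) (hx : x ∈ s) (hy : y ∈ s) (hf' : HasGradientAt f f' x) :
    ⟪f', y - x⟫ ≤ f y - f x := by
  have hline : HasDerivAt (f ∘ AffineMap.lineMap (k := ℝ) x y) ⟪f', y - x⟫ 0 :=
    hf'.hasFDerivAt.comp_hasDerivAt_of_eq 0 AffineMap.hasDerivAt_lineMap (by simp)
  have hslope := (hf.comp_affineMap (AffineMap.lineMap x y)).le_slope_of_hasDerivAt
    (by simpa using hx) (by simpa using hy) one_pos hline
  simpa [slope_def_field] using hslope

theorem HasGradientAt.rpow_const {f : E → ℝ} {f' x : E} {p : ℝ} (hf : HasGradientAt f f' x)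
    (h : f x ≠ 0 ∨ 1 ≤ p) :
    HasGradientAt (fun z => f z ^ p) ((p * f x ^ (p - 1)) • f') x := by
  have := hf.hasFDerivAt.rpow_const h
  rwa [← map_smul] at this

end

theorem Real.rpow_le_rpow_add_mul_sub_of_le_one {p a b : ℝ} (hp0 : 0 ≤ p) (hp1 : p ≤ 1)
    (ha : 0 ≤ a) (hb : 0 < b) :
    a ^ p ≤ b ^ p + p * b ^ (p - 1) * (a - b) := by
  have hbernoulli := rpow_one_add_le_one_add_mul_self
    (by linarith [div_nonneg ha hb.le] : (-1 : ℝ) ≤ a / b - 1) hp0 hp1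
  rw [add_sub_cancel, div_rpow ha hb.le, div_le_iff₀ (rpow_pos_of_pos hb p)] at hbernoulli
  calc a ^ p ≤ (1 + p * (a / b - 1)) * b ^ p := hbernoulli
    _ = b ^ p + p * (b ^ p / b) * (a - b) := by field_simp
    _ = b ^ p + p * b ^ (p - 1) * (a - b) := by rw [rpow_sub_one hb.ne']

theorem invex_rpow_of_convex_general {n : ℕ} (p : ℝ) (hp0 : 0 < p) (hp1 : p < 1)
    (X : Set (EuclideanSpace ℝ (Fin n)))
    (g : EuclideanSpace ℝ (Fin n) → ℝ)
    (hgconv : ConvexOn ℝ X g) (hgdiff : ∀ x ∈ X, DifferentiableAt ℝ g x)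
    (hgpos : ∀ x ∈ X, 0 < g x) :
    ∀ x ∈ X, ∀ y ∈ X,
      g y ^ p - g x ^ p ≥
        ⟪gradient (fun z => g z ^ p) x, ((g y / g x) ^ (p - 1)) • (y - x)⟫ := by
  intro x hx y hy
  have hgx := hgpos x hx
  have hgy := hgpos y hy
  have hgrad : HasGradientAt g (gradient g x) x := (hgdiff x hx).hasGradientAt
  have hconv := hgconv.inner_le_sub_of_hasGradientAt hx hy hgrad
  have htangent := Real.rpow_le_rpow_add_mul_sub_of_le_one hp0.le hp1.le hgx.le hgy
  have hcoef : g x ^ (p - 1) * (g y / g x) ^ (p - 1) = g y ^ (p - 1) := by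
    rw [Real.div_rpow hgy.le hgx.le, mul_div_cancel₀ _ (Real.rpow_pos_of_pos hgx _).ne']
  rw [(hgrad.rpow_const (Or.inl hgx.ne')).gradient, real_inner_smul_left, real_inner_smul_right]
  calc p * g x ^ (p - 1) * ((g y / g x) ^ (p - 1) * ⟪gradient g x, y - x⟫)
      = p * g y ^ (p - 1) * ⟪gradient g x, y - x⟫ := by rw [← hcoef]; ring
    _ ≤ p * g y ^ (p - 1) * (g y - g x) :=
        mul_le_mul_of_nonneg_left hconv (mul_pos hp0 (Real.rpow_pos_of_pos hgy _)).le
    _ ≤ g y ^ p - g x ^ p := by linarith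

/-- `f = g^p` with `0 < p < 1` and `g` convex positive is invex with kernel
`η(x,y) = (g(y)/g(x))^(p-1)·(y-x)`. -/
theorem invex_rpow_of_convex {n : ℕ} (p : ℝ) (hp0 : 0 < p) (hp1 : p < 1)
    (X : Set (EuclideanSpace ℝ (Fin n))) (hX : IsOpen X) (hXc : Convex ℝ X) (hXne : X.Nonempty)
    (g : EuclideanSpace ℝ (Fin n) → ℝ)
    (hgconv : ConvexOn ℝ X g) (hgdiff : ∀ x ∈ X, DifferentiableAt ℝ g x)
    (hgpos : ∀ x ∈ X, 0 < g x) :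
    ∀ x ∈ X, ∀ y ∈ X,
      g y ^ p - g x ^ p ≥
        ⟪gradient (fun z => g z ^ p) x, ((g y / g x) ^ (p - 1)) • (y - x)⟫ :=
  invex_rpow_of_convex_general p hp0 hp1 X g hgconv hgdiff hgpos
end

section
/- Let c > 0 and let g : X → ℝ be convex, differentiable, and strictly positive on an open convex set X ⊆ ℝⁿ. Then f(x) = g(x)/(g(x) + c) is invex with kernel η(x,y) = ((g(x)+c)/(g(y)+c))²·(y - x); that is, f(y) - f(x) ≥ ⟨∇f(x), η(x,y)⟩ for all x, y ∈ X. -/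
/-!
Write `f = φ ∘ g` with `φ t = t / (t + c)`. The chain rule gives
`⟪∇f(x), η(x,y)⟫ = φ'(g y) · Dg(x)(y - x)`, since the factor `((g x + c)/(g y + c))²` in the
kernel turns `φ'(g x) = c / (g x + c)²` into `φ'(g y)`. Convexity of `g` bounds `Dg(x)(y - x)`
by `g y - g x`, and concavity of `φ` bounds `φ'(g y) (g y - g x)` by `φ(g y) - φ(g x)`.
-/

open RealInnerProductSpace

theorem ConvexOn.fderiv_apply_sub_le {E : Type*} [NormedAddCommGroup E] [NormedSpace ℝ E]
    {s : Set E} {f : E → ℝ} (hf : ConvexOn ℝ s f) {x y : E} (hx : x ∈ s) (hy : y ∈ s)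
    (hd : DifferentiableAt ℝ f x) :
    fderiv ℝ f x (y - x) ≤ f y - f x := by
  let L : ℝ →ᵃ[ℝ] E := AffineMap.lineMap x y
  have hline : ConvexOn ℝ (L ⁻¹' s) (f ∘ L) := hf.comp_affineMap L
  have hderiv : HasDerivAt (f ∘ L) (fderiv ℝ f x (y - x)) 0 := by
    have hd' : HasFDerivAt f (fderiv ℝ f x) (L 0) := by simpa [L] using hd.hasFDerivAt
    exact hd'.comp_hasDerivAt 0 AffineMap.hasDerivAt_lineMap
  simpa [L, slope_def_field] using
    hline.le_slope_of_hasDerivAt (by simpa [L] using hx) (by simpa [L] using hy) zero_lt_one hderiv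

theorem hasDerivAt_div_add_const {𝕜 : Type*} [NontriviallyNormedField 𝕜] {a c : 𝕜}
    (h : a + c ≠ 0) : HasDerivAt (fun t => t / (t + c)) (c / (a + c) ^ 2) a :=
  ((hasDerivAt_id' a).div ((hasDerivAt_id' a).add_const c) h).congr_deriv (by ring)

/-- The tangent inequality at `b` for the concave function `t ↦ t / (t + c)`. -/
theorem div_sq_mul_sub_le_div_add_sub_div_add {a b c : ℝ} (hc : 0 ≤ c) (ha : 0 < a + c)
    (hb : 0 < b + c) :
    c / (b + c) ^ 2 * (b - a) ≤ b / (b + c) - a / (a + c) := by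
  have key : b / (b + c) - a / (a + c) - c / (b + c) ^ 2 * (b - a)
      = c * (b - a) ^ 2 / ((a + c) * (b + c) ^ 2) := by
    field_simp
    ring
  have : 0 ≤ c * (b - a) ^ 2 / ((a + c) * (b + c) ^ 2) := by positivity
  linarith

theorem invex_frac_of_convex_general {n : ℕ} (c : ℝ) (hc : 0 < c)
    (X : Set (EuclideanSpace ℝ (Fin n)))
    (g : EuclideanSpace ℝ (Fin n) → ℝ)
    (hgconv : ConvexOn ℝ X g) (hgdiff : ∀ x ∈ X, DifferentiableAt ℝ g x)
    (hgpos : ∀ x ∈ X, 0 < g x) :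
    ∀ x ∈ X, ∀ y ∈ X,
      g y / (g y + c) - g x / (g x + c) ≥
        ⟪gradient (fun z => g z / (g z + c)) x,
          (((g x + c) / (g y + c)) ^ 2) • (y - x)⟫ := by
  intro x hx y hy
  have hxc : 0 < g x + c := by linarith [hgpos x hx]
  have hyc : 0 < g y + c := by linarith [hgpos y hy]
  have hf : HasFDerivAt (fun z => g z / (g z + c)) ((c / (g x + c) ^ 2) • fderiv ℝ g x) x :=
    (hasDerivAt_div_add_const hxc.ne').comp_hasFDerivAt x (hgdiff x hx).hasFDerivAt
  rw [inner_smul_right, inner_gradient_left, hf.fderiv, smul_apply, smul_eq_mul]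
  calc ((g x + c) / (g y + c)) ^ 2 * (c / (g x + c) ^ 2 * fderiv ℝ g x (y - x))
      = c / (g y + c) ^ 2 * fderiv ℝ g x (y - x) := by field_simp
    _ ≤ c / (g y + c) ^ 2 * (g y - g x) := by
      gcongr
      exact hgconv.fderiv_apply_sub_le hx hy (hgdiff x hx)
    _ ≤ g y / (g y + c) - g x / (g x + c) :=
      div_sq_mul_sub_le_div_add_sub_div_add hc.le hxc hyc

/-- `f = g/(g+c)` with `c > 0` and `g` convex positive is invex with kernel
`η(x,y) = ((g(x)+c)/(g(y)+c))²·(y-x)`. -/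
theorem invex_frac_of_convex {n : ℕ} (c : ℝ) (hc : 0 < c)
    (X : Set (EuclideanSpace ℝ (Fin n))) (hX : IsOpen X) (hXc : Convex ℝ X) (hXne : X.Nonempty)
    (g : EuclideanSpace ℝ (Fin n) → ℝ)
    (hgconv : ConvexOn ℝ X g) (hgdiff : ∀ x ∈ X, DifferentiableAt ℝ g x)
    (hgpos : ∀ x ∈ X, 0 < g x) :
    ∀ x ∈ X, ∀ y ∈ X,
      g y / (g y + c) - g x / (g x + c) ≥
        ⟪gradient (fun z => g z / (g z + c)) x,
          (((g x + c) / (g y + c)) ^ 2) • (y - x)⟫ :=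
  invex_frac_of_convex_general c hc X g hgconv hgdiff hgpos
end

section
/- For each x ∈ ℝ where the function fᵢ(x) = log(|x| + 1) is differentiable (i.e., x ≠ 0), and for every y ∈ ℝ: log(|y|+1) - log(|x|+1) ≥ fᵢ'(x) · ((1+|x|)/(1+|y|))·(y - x); moreover x = 0 is the global minimizer. Hence f(x) = Σᵢ log(|xᵢ|+1) on ℝⁿ is invex with kernel η(x,y) with i-th component ((1+|xᵢ|)/(1+|yᵢ|))·(yᵢ - xᵢ). -/
/-!
With `s = sign x`, the derivative of `log (|t| + 1)` at `x ≠ 0` is `s / (|x| + 1)`, so the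
kernel term collapses to `s (y - x) / (1 + |y|) ≤ (|y| - |x|) / (1 + |y|)`, and the latter is
at most `log (1 + |y|) - log (1 + |x|)` by `1 - 1/u ≤ log u`. In `ℝⁿ` the sum is differentiable
only where no coordinate vanishes; there its gradient is the vector of these one-dimensional
derivatives, and the invexity inequality is the coordinatewise one summed.
-/

open RealInnerProductSpace

namespace Real

lemma sign_mul_sub_le_abs_sub_abs (x y : ℝ) : (SignType.sign x : ℝ) * (y - x) ≤ |y| - |x| := by
  rw [mul_sub, sign_mul_self]
  rcases lt_trichotomy x 0 with h | rfl | h <;> simp [*, le_abs_self, neg_le_abs]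

lemma sub_div_le_log_sub_log {a b : ℝ} (ha : 0 < a) (hb : 0 < b) :
    (b - a) / b ≤ log b - log a := by
  have := one_sub_inv_le_log_of_pos (div_pos hb ha)
  rwa [log_div hb.ne' ha.ne', inv_div, one_sub_div hb.ne'] at this

lemma hasDerivAt_log_abs_add_one {x : ℝ} (hx : x ≠ 0) :
    HasDerivAt (fun t => log (|t| + 1)) (SignType.sign x / (|x| + 1)) x :=
  ((hasDerivAt_abs hx).add_const 1).log (by positivity)

lemma not_differentiableAt_log_abs_add_one_zero :
    ¬ DifferentiableAt ℝ (fun t => log (|t| + 1)) 0 := by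
  intro h
  have hexp : (fun t : ℝ => exp (log (|t| + 1)) - 1) = abs := by
    funext t
    rw [exp_log (by positivity), add_sub_cancel_right]
  exact not_differentiableAt_abs_zero (by rw [← hexp]; exact h.exp.sub_const 1)

lemma sign_div_mul_le_log_abs_add_one_sub (x y : ℝ) :
    (SignType.sign x : ℝ) / (|x| + 1) * ((1 + |x|) / (1 + |y|) * (y - x)) ≤
      log (|y| + 1) - log (|x| + 1) :=
  calc _ = SignType.sign x * (y - x) / (|y| + 1) := by field_simp; ring
    _ ≤ (|y| - |x|) / (|y| + 1) := by gcongr; exact sign_mul_sub_le_abs_sub_abs x y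
    _ = ((|y| + 1) - (|x| + 1)) / (|y| + 1) := by ring
    _ ≤ _ := sub_div_le_log_sub_log (by positivity) (by positivity)

end Real

section Separable

variable {ι F : Type*} [Fintype ι] [NormedAddCommGroup F] [NormedSpace ℝ F]

lemma DifferentiableAt.of_sum_comp_apply {f : ℝ → F} {x : EuclideanSpace ℝ ι}
    (h : DifferentiableAt ℝ (fun z : EuclideanSpace ℝ ι => ∑ j, f (z j)) x) (i : ι) :
    DifferentiableAt ℝ f (x i) := by
  classical
  set line : ℝ → EuclideanSpace ℝ ι := fun t => x + (t - x i) • EuclideanSpace.single i 1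
  have hline : DifferentiableAt ℝ line (x i) :=
    ((differentiableAt_id.sub_const _).smul_const _).const_add _
  have hslice :
      (fun t => ∑ j, f (line t j)) = fun t => f t + ∑ j ∈ Finset.univ.erase i, f (x j) := by
    funext t
    rw [← Finset.add_sum_erase _ _ (Finset.mem_univ i)]
    congr 1
    · simp [line]
    · refine Finset.sum_congr rfl fun j hj => ?_
      simp [line, Finset.ne_of_mem_erase hj]
  have : DifferentiableAt ℝ (fun t => ∑ j, f (line t j)) (x i) := by
    refine DifferentiableAt.comp (g := fun z : EuclideanSpace ℝ ι => ∑ j, f (z j)) _ ?_ hline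
    simpa [line] using h
  rw [hslice] at this
  simpa using this.sub_const (∑ j ∈ Finset.univ.erase i, f (x j))

lemma hasGradientAt_sum_comp_apply {f : ℝ → ℝ} {f' : ι → ℝ} {x : EuclideanSpace ℝ ι}
    (hf : ∀ i, HasDerivAt f (f' i) (x i)) :
    HasGradientAt (fun z : EuclideanSpace ℝ ι => ∑ i, f (z i)) (WithLp.toLp 2 f') x := by
  have hF : HasFDerivAt (fun z : EuclideanSpace ℝ ι => ∑ i, f (z i))
      (∑ i, f' i • (EuclideanSpace.proj i : EuclideanSpace ℝ ι →L[ℝ] ℝ)) x :=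
    HasFDerivAt.fun_sum fun i _ => (hf i).comp_hasFDerivAt x
      (EuclideanSpace.proj i : EuclideanSpace ℝ ι →L[ℝ] ℝ).hasFDerivAt
  rw [hasGradientAt_iff_hasFDerivAt]
  refine hF.congr_fderiv (ContinuousLinearMap.ext fun v => ?_)
  simp [PiLp.inner_apply, mul_comm]

end Separable

/-- The invex regularizer `x ↦ log(|x|+1)`: the one-dimensional kernel inequality at
differentiable points, the global minimality of `0`, and the invexity of the
separable sum on `ℝⁿ` with the componentwise kernel. -/
theorem invex_log_abs_regularizer {n : ℕ} :
    (∀ x : ℝ, x ≠ 0 → ∀ y : ℝ,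
      Real.log (|y| + 1) - Real.log (|x| + 1) ≥
        deriv (fun t => Real.log (|t| + 1)) x * ((1 + |x|) / (1 + |y|) * (y - x))) ∧
    (∀ y : ℝ, Real.log (|(0 : ℝ)| + 1) ≤ Real.log (|y| + 1)) ∧
    (∀ x y : EuclideanSpace ℝ (Fin n),
      DifferentiableAt ℝ (fun z : EuclideanSpace ℝ (Fin n) =>
        ∑ i, Real.log (|z i| + 1)) x →
      (∑ i, Real.log (|y i| + 1)) - (∑ i, Real.log (|x i| + 1)) ≥
        ⟪gradient (fun z : EuclideanSpace ℝ (Fin n) => ∑ i, Real.log (|z i| + 1)) x,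
          (WithLp.toLp 2 (fun i => (1 + |x i|) / (1 + |y i|) * (y i - x i)) : EuclideanSpace ℝ (Fin n))⟫) := by
  refine ⟨fun x hx y => ?_, fun y => ?_, fun x y hdiff => ?_⟩
  · rw [(Real.hasDerivAt_log_abs_add_one hx).deriv]
    exact Real.sign_div_mul_le_log_abs_add_one_sub x y
  · rw [abs_zero]
    gcongr
    exact abs_nonneg y
  · have hx (i : Fin n) : x i ≠ 0 := fun hxi =>
      Real.not_differentiableAt_log_abs_add_one_zero (hxi ▸ hdiff.of_sum_comp_apply i)
    rw [(hasGradientAt_sum_comp_apply fun i => Real.hasDerivAt_log_abs_add_one (hx i)).gradient,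
      PiLp.inner_apply, ← Finset.sum_sub_distrib]
    refine Finset.sum_le_sum fun i _ => ?_
    rw [RCLike.inner_apply, conj_trivial, mul_comm]
    exact Real.sign_div_mul_le_log_abs_add_one_sub (x i) (y i)
end

section
/- Let f : (a,b) → ℝ be continuous on an open interval and suppose every point x* ∈ (a,b) with 0 ∈ ∂f(x*) (Clarke subdifferential) is a global minimizer of f. Then every sublevel set {x ∈ (a,b) : f(x) ≤ α} is an interval (convex); i.e., a locally Lipschitz invex function of one real variable is quasiconvex. -/
/-!
If a sublevel set `{f ≤ α}` were not an interval, `f` would attain its maximum over some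
`[x₁, x₂]` with `f x₁, f x₂ ≤ α` at an interior point `m` with `f m > α`. At an interior local
maximum of a Lipschitz function `0` is a Clarke subgradient: by the fundamental theorem of calculus
for absolutely continuous functions, slightly to the left of `m` there are points of
differentiability with derivative `> -ε`, and slightly to the right ones with derivative `< ε`.
These derivatives are bounded by the Lipschitz constant, so subsequences converge to a nonnegative
and a nonpositive limiting gradient, whose convex hull contains `0`. Invexity then makes `m` a
global minimizer, contradicting `f m > α ≥ f x₁`.
-/

open Filter Topology

/-- The Clarke subdifferential of `f : ℝ → ℝ` relative to a set `s`, defined as the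
convex hull of limits of derivatives at nearby points of differentiability in `s`. -/
noncomputable def clarkeSubdiffOn (f : ℝ → ℝ) (s : Set ℝ) (x : ℝ) : Set ℝ :=
  convexHull ℝ {ξ | ∃ u : ℕ → ℝ,
    (∀ k, u k ∈ s ∧ DifferentiableAt ℝ f (u k)) ∧
    Tendsto u atTop (𝓝 x) ∧
    Tendsto (fun k => deriv f (u k)) atTop (𝓝 ξ)}

open Set MeasureTheory
open scoped NNReal

namespace AbsolutelyContinuousOnInterval

variable {f : ℝ → ℝ} {a b c : ℝ}

theorem slope_le_of_ae_deriv_le (hf : AbsolutelyContinuousOnInterval f a b) (hab : a < b)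
    (h : ∀ᵐ x, x ∈ Ioo a b → deriv f x ≤ c) : slope f a b ≤ c := by
  have h' : deriv f ≤ᵐ[volume.restrict (Icc a b)] fun _ => c := by
    rw [← Measure.restrict_congr_set Ioo_ae_eq_Icc]
    exact (ae_restrict_iff' measurableSet_Ioo).2 h
  have := intervalIntegral.integral_mono_ae_restrict hab.le hf.intervalIntegrable_deriv
    intervalIntegrable_const h'
  rw [hf.integral_deriv_eq_sub, intervalIntegral.integral_const, smul_eq_mul] at this
  rw [slope_def_field, div_le_iff₀ (sub_pos.2 hab)]
  linarith

theorem le_slope_of_ae_le_deriv (hf : AbsolutelyContinuousOnInterval f a b) (hab : a < b)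
    (h : ∀ᵐ x, x ∈ Ioo a b → c ≤ deriv f x) : c ≤ slope f a b := by
  have h' : (fun _ => c) ≤ᵐ[volume.restrict (Icc a b)] deriv f := by
    rw [← Measure.restrict_congr_set Ioo_ae_eq_Icc]
    exact (ae_restrict_iff' measurableSet_Ioo).2 h
  have := intervalIntegral.integral_mono_ae_restrict hab.le intervalIntegrable_const
    hf.intervalIntegrable_deriv h'
  rw [hf.integral_deriv_eq_sub, intervalIntegral.integral_const, smul_eq_mul] at this
  rw [slope_def_field, le_div_iff₀ (sub_pos.2 hab)]
  linarith

theorem exists_lt_deriv_of_lt_slope (hf : AbsolutelyContinuousOnInterval f a b) (hab : a < b)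
    (hc : c < slope f a b) : ∃ u ∈ Ioo a b, DifferentiableAt ℝ f u ∧ c < deriv f u := by
  by_contra! h
  refine (hf.slope_le_of_ae_deriv_le hab ?_).not_gt hc
  filter_upwards [hf.ae_differentiableAt] with x hx hxab
  exact h x hxab (hx (uIcc_of_le hab.le ▸ Ioo_subset_Icc_self hxab))

theorem exists_deriv_lt_of_slope_lt (hf : AbsolutelyContinuousOnInterval f a b) (hab : a < b)
    (hc : slope f a b < c) : ∃ u ∈ Ioo a b, DifferentiableAt ℝ f u ∧ deriv f u < c := by
  by_contra! h
  refine (hf.le_slope_of_ae_le_deriv hab ?_).not_gt hc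
  filter_upwards [hf.ae_differentiableAt] with x hx hxab
  exact h x hxab (hx (uIcc_of_le hab.le ▸ Ioo_subset_Icc_self hxab))

end AbsolutelyContinuousOnInterval

def derivLimitSet (f : ℝ → ℝ) (s : Set ℝ) (x : ℝ) : Set ℝ :=
  {ξ | ∃ u : ℕ → ℝ, (∀ k, u k ∈ s ∧ DifferentiableAt ℝ f (u k)) ∧
    Tendsto u atTop (𝓝 x) ∧ Tendsto (fun k => deriv f (u k)) atTop (𝓝 ξ)}

section derivLimitSet

variable {f : ℝ → ℝ} {s t : Set ℝ} {x : ℝ}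

theorem clarkeSubdiffOn_eq_convexHull :
    clarkeSubdiffOn f s x = convexHull ℝ (derivLimitSet f s x) :=
  rfl

theorem derivLimitSet_mono (hst : s ⊆ t) : derivLimitSet f s x ⊆ derivLimitSet f t x :=
  fun _ ⟨u, hu, hux, hξ⟩ => ⟨u, fun k => ⟨hst (hu k).1, (hu k).2⟩, hux, hξ⟩

theorem clarkeSubdiffOn_mono (hst : s ⊆ t) : clarkeSubdiffOn f s x ⊆ clarkeSubdiffOn f t x := by
  simpa only [clarkeSubdiffOn_eq_convexHull] using convexHull_mono (derivLimitSet_mono hst)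

theorem zero_mem_clarkeSubdiffOn {ξ₁ ξ₂ : ℝ} (h₁ : ξ₁ ∈ derivLimitSet f s x)
    (h₂ : ξ₂ ∈ derivLimitSet f s x) (hξ₁ : ξ₁ ≤ 0) (hξ₂ : 0 ≤ ξ₂) :
    (0 : ℝ) ∈ clarkeSubdiffOn f s x :=
  clarkeSubdiffOn_eq_convexHull ▸
    segment_subset_convexHull h₁ h₂ (segment_eq_Icc (hξ₁.trans hξ₂) ▸ ⟨hξ₁, hξ₂⟩)

theorem exists_mem_derivLimitSet_subseq {u : ℕ → ℝ} {K : ℝ}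
    (hu : ∀ n, u n ∈ s ∧ DifferentiableAt ℝ f (u n)) (hux : Tendsto u atTop (𝓝 x))
    (hK : ∀ n, |deriv f (u n)| ≤ K) :
    ∃ ξ ∈ derivLimitSet f s x, ∃ φ : ℕ → ℕ, StrictMono φ ∧
      Tendsto (fun k => deriv f (u (φ k))) atTop (𝓝 ξ) := by
  obtain ⟨ξ, -, φ, hφ, hξ⟩ := isCompact_Icc.tendsto_subseq fun n => abs_le.1 (hK n)
  exact ⟨ξ, ⟨u ∘ φ, fun k => hu (φ k), hux.comp hφ.tendsto_atTop, hξ⟩, φ, hφ, hξ⟩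

theorem exists_nonneg_mem_derivLimitSet {K : ℝ}
    (h : ∀ ε > 0, ∃ u ∈ s ∩ Metric.ball x ε, DifferentiableAt ℝ f u ∧ |deriv f u| ≤ K ∧
      -ε < deriv f u) :
    ∃ ξ ∈ derivLimitSet f s x, 0 ≤ ξ := by
  choose u hu hdiff hK hlow using fun n : ℕ => h (1 / (n + 1)) Nat.one_div_pos_of_nat
  have hε : Tendsto (fun n : ℕ => 1 / ((n : ℝ) + 1)) atTop (𝓝 0) :=
    tendsto_one_div_add_atTop_nhds_zero_nat
  have hux : Tendsto u atTop (𝓝 x) := tendsto_iff_dist_tendsto_zero.2 <|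
    squeeze_zero (fun _ => dist_nonneg) (fun n => (hu n).2.le) hε
  obtain ⟨ξ, hξ, φ, hφ, hlim⟩ :=
    exists_mem_derivLimitSet_subseq (fun n => ⟨(hu n).1, hdiff n⟩) hux hK
  refine ⟨ξ, hξ, ?_⟩
  simpa using le_of_tendsto_of_tendsto' (hε.neg.comp hφ.tendsto_atTop) hlim
    fun k => (hlow (φ k)).le

theorem exists_nonpos_mem_derivLimitSet {K : ℝ}
    (h : ∀ ε > 0, ∃ u ∈ s ∩ Metric.ball x ε, DifferentiableAt ℝ f u ∧ |deriv f u| ≤ K ∧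
      deriv f u < ε) :
    ∃ ξ ∈ derivLimitSet f s x, ξ ≤ 0 := by
  choose u hu hdiff hK hhigh using fun n : ℕ => h (1 / (n + 1)) Nat.one_div_pos_of_nat
  have hε : Tendsto (fun n : ℕ => 1 / ((n : ℝ) + 1)) atTop (𝓝 0) :=
    tendsto_one_div_add_atTop_nhds_zero_nat
  have hux : Tendsto u atTop (𝓝 x) := tendsto_iff_dist_tendsto_zero.2 <|
    squeeze_zero (fun _ => dist_nonneg) (fun n => (hu n).2.le) hε
  obtain ⟨ξ, hξ, φ, hφ, hlim⟩ :=
    exists_mem_derivLimitSet_subseq (fun n => ⟨(hu n).1, hdiff n⟩) hux hK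
  exact ⟨ξ, hξ, le_of_tendsto_of_tendsto' hlim (hε.comp hφ.tendsto_atTop)
    fun k => (hhigh (φ k)).le⟩

theorem exists_nonneg_mem_derivLimitSet_of_le_left {K : ℝ≥0} (ht : t ∈ 𝓝 x)
    (hf : LipschitzOnWith K f t) (hle : ∀ᶠ y in 𝓝[<] x, f y ≤ f x) :
    ∃ ξ ∈ derivLimitSet f t x, 0 ≤ ξ := by
  refine exists_nonneg_mem_derivLimitSet (K := K) fun ε hε => ?_
  have hIcc : ∀ᶠ y in 𝓝[<] x, Icc y x ⊆ interior t :=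
    ((tendsto_nhdsWithin_of_tendsto_nhds tendsto_id).Icc tendsto_const_nhds).eventually
      (eventually_smallSets_subset.2 (interior_mem_nhds.2 ht))
  obtain ⟨y, ⟨hfy, hyt⟩, hy⟩ :=
    ((hle.and hIcc).and (Ioo_mem_nhdsLT (sub_lt_self x hε))).exists
  have hslope : -ε < slope f y x := by
    rw [slope_def_field]
    exact (neg_neg_of_pos hε).trans_le (div_nonneg (sub_nonneg.2 hfy) (sub_nonneg.2 hy.2.le))
  have hac : AbsolutelyContinuousOnInterval f y x :=
    LipschitzOnWith.absolutelyContinuousOnInterval <|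
      hf.mono ((uIcc_of_le hy.2.le).subset.trans (hyt.trans interior_subset))
  obtain ⟨u, hu, hdiff, hderiv⟩ := hac.exists_lt_deriv_of_lt_slope hy.2 hslope
  have hut : t ∈ 𝓝 u := mem_interior_iff_mem_nhds.1 (hyt (Ioo_subset_Icc_self hu))
  refine ⟨u, ⟨mem_of_mem_nhds hut, ?_⟩, hdiff, norm_deriv_le_of_lipschitzOn hut hf, hderiv⟩
  rw [Metric.mem_ball, Real.dist_eq, abs_sub_lt_iff]
  constructor <;> linarith [hu.1, hu.2, hy.1]

theorem exists_nonpos_mem_derivLimitSet_of_le_right {K : ℝ≥0} (ht : t ∈ 𝓝 x)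
    (hf : LipschitzOnWith K f t) (hle : ∀ᶠ y in 𝓝[>] x, f y ≤ f x) :
    ∃ ξ ∈ derivLimitSet f t x, ξ ≤ 0 := by
  refine exists_nonpos_mem_derivLimitSet (K := K) fun ε hε => ?_
  have hIcc : ∀ᶠ y in 𝓝[>] x, Icc x y ⊆ interior t :=
    (tendsto_const_nhds.Icc (tendsto_nhdsWithin_of_tendsto_nhds tendsto_id)).eventually
      (eventually_smallSets_subset.2 (interior_mem_nhds.2 ht))
  obtain ⟨y, ⟨hfy, hyt⟩, hy⟩ :=
    ((hle.and hIcc).and (Ioo_mem_nhdsGT (lt_add_of_pos_right x hε))).exists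
  have hslope : slope f x y < ε := by
    rw [slope_def_field]
    exact (div_nonpos_of_nonpos_of_nonneg (sub_nonpos.2 hfy) (sub_nonneg.2 hy.1.le)).trans_lt hε
  have hac : AbsolutelyContinuousOnInterval f x y :=
    LipschitzOnWith.absolutelyContinuousOnInterval <|
      hf.mono ((uIcc_of_le hy.1.le).subset.trans (hyt.trans interior_subset))
  obtain ⟨u, hu, hdiff, hderiv⟩ := hac.exists_deriv_lt_of_slope_lt hy.1 hslope
  have hut : t ∈ 𝓝 u := mem_interior_iff_mem_nhds.1 (hyt (Ioo_subset_Icc_self hu))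
  refine ⟨u, ⟨mem_of_mem_nhds hut, ?_⟩, hdiff, norm_deriv_le_of_lipschitzOn hut hf, hderiv⟩
  rw [Metric.mem_ball, Real.dist_eq, abs_sub_lt_iff]
  constructor <;> linarith [hu.1, hu.2, hy.2]

theorem zero_mem_clarkeSubdiffOn_of_isLocalMax {K : ℝ≥0} (ht : t ∈ 𝓝 x)
    (hf : LipschitzOnWith K f t) (hmax : IsLocalMax f x) : (0 : ℝ) ∈ clarkeSubdiffOn f t x := by
  obtain ⟨ξ₁, h₁, hξ₁⟩ := exists_nonpos_mem_derivLimitSet_of_le_right ht hf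
    (nhdsWithin_le_nhds hmax)
  obtain ⟨ξ₂, h₂, hξ₂⟩ := exists_nonneg_mem_derivLimitSet_of_le_left ht hf
    (nhdsWithin_le_nhds hmax)
  exact zero_mem_clarkeSubdiffOn h₁ h₂ hξ₁ hξ₂

end derivLimitSet

/-- A locally Lipschitz invex function of one real variable (every Clarke stationary
point is a global minimizer) is quasiconvex: all sublevel sets are convex. -/
theorem invex_one_dim_quasiconvex (a b : ℝ) (f : ℝ → ℝ)
    (hcont : ContinuousOn f (Set.Ioo a b))
    (hlip : ∀ x ∈ Set.Ioo a b, ∃ K : NNReal, ∃ ε > 0,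
      LipschitzOnWith K f (Metric.ball x ε ∩ Set.Ioo a b))
    (hinvex : ∀ x ∈ Set.Ioo a b, 0 ∈ clarkeSubdiffOn f (Set.Ioo a b) x →
      ∀ y ∈ Set.Ioo a b, f x ≤ f y) :
    ∀ α : ℝ, Convex ℝ {x | x ∈ Set.Ioo a b ∧ f x ≤ α} := by
  intro α
  refine convex_iff_ordConnected.2 ⟨?_⟩
  rintro x₁ ⟨hx₁, hfx₁⟩ x₂ ⟨hx₂, hfx₂⟩ z hz
  have hsub : Icc x₁ x₂ ⊆ Ioo a b := Icc_subset_Ioo hx₁.1 hx₂.2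
  refine ⟨hsub hz, ?_⟩
  by_contra! hfz
  obtain ⟨m, hm, hmax⟩ := isCompact_Icc.exists_isMaxOn ⟨z, hz⟩ (hcont.mono hsub)
  have hfm : α < f m := hfz.trans_le (hmax hz)
  have hm' : m ∈ Ioo x₁ x₂ :=
    ⟨hm.1.lt_of_ne (by rintro rfl; linarith), hm.2.lt_of_ne (by rintro rfl; linarith)⟩
  obtain ⟨K, ε, hε, hK⟩ := hlip m (hsub hm)
  have h0 : (0 : ℝ) ∈ clarkeSubdiffOn f (Ioo a b) m :=
    clarkeSubdiffOn_mono inter_subset_right <| zero_mem_clarkeSubdiffOn_of_isLocalMax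
      (inter_mem (Metric.ball_mem_nhds m hε) (Ioo_mem_nhds (hsub hm).1 (hsub hm).2)) hK
      (hmax.isLocalMax (Icc_mem_nhds hm'.1 hm'.2))
  linarith [hinvex m (hsub hm) h0 x₁ hx₁]
end
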